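/- Under the embedding of A = ℝ[u,v]/(u² + v² + 1) into ℂ((t⁻¹)) given by u ↦ (t − t⁻¹)/2 and v ↦ (t + t⁻¹)/(2i), the preimage of the valuation subring ℂ[[t⁻¹]] ⊂ ℂ((t⁻¹)) is exactly the subring ℝ·1 of constants. -/

import Mathlib

open HahnSeries MvPolynomial

noncomputable section

/-- `t^i ∈ ℂ((t⁻¹))`: we model `ℂ((t⁻¹))` as `LaurentSeries ℂ` in the variable
`T = t⁻¹`, so `t^i = T^{-i}`. -/
def tPow (i : ℤ) : LaurentSeries ℂ := HahnSeries.single (-i) (1 : ℂ)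

/-- The coordinate ring `ℝ[u,v]/(u² + v² + 1)` of the affine part of the twistor
projective line. -/
abbrev TwistorRing : Type :=
  MvPolynomial (Fin 2) ℝ ⧸ Ideal.span {(X 0 : MvPolynomial (Fin 2) ℝ) ^ 2 + X 1 ^ 2 + 1}

/-!
Every element of `A` can be written `f(u) + g(u) v` with `f, g ∈ ℝ[u]`, because
`v² = -(u² + 1)`. The images of `u` and `v` have leading terms `t/2` and `t/(2i)`, so for
`n = max(deg f, deg g + 1) ≥ 1` the coefficient of `tⁿ` in the image is `(fₙ - i gₙ₋₁) / 2ⁿ`,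
whose real and imaginary parts come from `f(u)` and `g(u) v` separately. If the image lies in
`ℂ[[t⁻¹]]`, this coefficient vanishes, which forces `g = 0` and `deg f = 0`.
-/

theorem coeff_mul_tPow (y : LaurentSeries ℂ) (i m : ℤ) :
    (y * tPow i).coeff m = y.coeff (m + i) := by
  rw [tPow, coeff_mul_single, sub_neg_eq_add, mul_one]

theorem coeff_div_algebraMap {K : Type*} [Field K] (y : LaurentSeries K) (c : K) (m : ℤ) :
    (y / algebraMap K (LaurentSeries K) c).coeff m = y.coeff m / c := by
  rw [div_eq_mul_inv, ← map_inv₀, LaurentSeries.algebraMap_apply, HahnSeries.C_apply,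
    coeff_mul_single_zero, div_eq_mul_inv]

theorem algebraMap_real_eq_C (r : ℝ) :
    algebraMap ℝ (LaurentSeries ℂ) r = HahnSeries.C (r : ℂ) := by
  rw [algebraMap_apply', PowerSeries.algebraMap_apply, ofPowerSeries_C, Complex.coe_algebraMap]

theorem coeff_algebraMap_real_mul (r : ℝ) (y : LaurentSeries ℂ) (m : ℤ) :
    (algebraMap ℝ (LaurentSeries ℂ) r * y).coeff m = r * y.coeff m := by
  rw [algebraMap_real_eq_C, HahnSeries.C_apply, coeff_single_zero_mul]

def twistorU : LaurentSeries ℂ := (tPow 1 - tPow (-1)) / 2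

def twistorV : LaurentSeries ℂ :=
  (tPow 1 + tPow (-1)) / (2 * algebraMap ℂ (LaurentSeries ℂ) Complex.I)

theorem coeff_mul_twistorU (y : LaurentSeries ℂ) (m : ℤ) :
    (y * twistorU).coeff m = (y.coeff (m + 1) - y.coeff (m - 1)) / 2 := by
  rw [twistorU, mul_div_assoc', ← map_ofNat (algebraMap ℂ (LaurentSeries ℂ)),
    coeff_div_algebraMap, mul_sub, HahnSeries.coeff_sub, coeff_mul_tPow, coeff_mul_tPow,
    ← sub_eq_add_neg]

theorem coeff_mul_twistorV (y : LaurentSeries ℂ) (m : ℤ) :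
    (y * twistorV).coeff m = (y.coeff (m + 1) + y.coeff (m - 1)) / (2 * Complex.I) := by
  rw [twistorV, mul_div_assoc', ← map_ofNat (algebraMap ℂ (LaurentSeries ℂ)), ← map_mul,
    coeff_div_algebraMap, mul_add, HahnSeries.coeff_add, coeff_mul_tPow, coeff_mul_tPow,
    ← sub_eq_add_neg]

theorem coeff_twistorU_pow_of_lt (k : ℕ) {m : ℤ} (hm : m < -k) :
    (twistorU ^ k).coeff m = 0 := by
  induction k generalizing m with
  | zero => rw [pow_zero, HahnSeries.coeff_one, if_neg (by omega)]
  | succ k ih =>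
    rw [pow_succ, coeff_mul_twistorU, ih (by omega), ih (by omega), sub_zero, zero_div]

theorem coeff_twistorU_pow_neg_self (k : ℕ) : (twistorU ^ k).coeff (-k) = 2⁻¹ ^ k := by
  induction k with
  | zero => simp
  | succ k ih =>
    rw [pow_succ, coeff_mul_twistorU,
      coeff_twistorU_pow_of_lt k (m := -(k + 1 : ℕ) - 1) (by omega), Nat.cast_succ, neg_add,
      neg_add_cancel_right, ih, sub_zero, pow_succ, div_eq_mul_inv]

theorem coeff_aeval_twistorU (f : Polynomial ℝ) {n : ℕ} (hn : f.natDegree ≤ n) :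
    (Polynomial.aeval twistorU f).coeff (-n) = f.coeff n / 2 ^ n := by
  rw [Polynomial.aeval_eq_sum_range' (Nat.lt_succ_of_le hn), HahnSeries.coeff_sum,
    Finset.sum_range_succ, Finset.sum_eq_zero fun i hi => ?_, zero_add, Algebra.smul_def,
    coeff_algebraMap_real_mul, coeff_twistorU_pow_neg_self, inv_pow, div_eq_mul_inv]
  rw [Finset.mem_range] at hi
  rw [Algebra.smul_def, coeff_algebraMap_real_mul, coeff_twistorU_pow_of_lt i (by omega),
    mul_zero]

theorem coeff_aeval_add_aeval_mul_twistorV (f g : Polynomial ℝ) {n : ℕ}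
    (hf : f.natDegree ≤ n + 1) (hg : g.natDegree ≤ n) :
    (Polynomial.aeval twistorU f + Polynomial.aeval twistorU g * twistorV).coeff (-(n + 1 : ℕ)) =
      (f.coeff (n + 1) - g.coeff n * Complex.I) / 2 ^ (n + 1) := by
  have hup : -((n + 1 : ℕ) : ℤ) + 1 = -(n : ℕ) := by omega
  have hdown : -((n + 1 : ℕ) : ℤ) - 1 = -(n + 2 : ℕ) := by omega
  rw [HahnSeries.coeff_add, coeff_mul_twistorV, coeff_aeval_twistorU f hf, hup, hdown,
    coeff_aeval_twistorU g hg, coeff_aeval_twistorU g (by omega),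
    g.coeff_eq_zero_of_natDegree_lt (n := n + 2) (by omega),
    Complex.ofReal_zero, zero_div, add_zero]
  field_simp
  linear_combination (2 ^ n * 2 * (g.coeff n : ℂ)) * Complex.I_sq

theorem natDegree_eq_zero_and_eq_zero_of_coeff_neg_eq_zero (f g : Polynomial ℝ)
    (h : ∀ m : ℤ, m < 0 →
      (Polynomial.aeval twistorU f + Polynomial.aeval twistorU g * twistorV).coeff m = 0) :
    f.natDegree = 0 ∧ g = 0 := by
  have top_coeff : ∀ n, f.natDegree ≤ n + 1 → g.natDegree ≤ n →
      f.coeff (n + 1) = 0 ∧ g.coeff n = 0 := by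
    intro n hf hg
    have h0 := h _ (by omega : -((n + 1 : ℕ) : ℤ) < 0)
    rw [coeff_aeval_add_aeval_mul_twistorV f g hf hg, div_eq_zero_iff,
      or_iff_left (pow_ne_zero _ two_ne_zero), Complex.ext_iff] at h0
    simpa using h0
  have lead : ∀ p : Polynomial ℝ, p ≠ 0 → p.coeff p.natDegree ≠ 0 :=
    fun p hp => Polynomial.leadingCoeff_ne_zero.2 hp
  obtain ⟨hfN, hgN⟩ :=
    top_coeff (max (f.natDegree - 1) g.natDegree) (by omega) (le_max_right _ _)
  have hf : f.natDegree ≠ max (f.natDegree - 1) g.natDegree + 1 := fun hd =>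
    lead f (by rintro rfl; simp at hd) (hd ▸ hfN)
  have hg : g = 0 := by
    by_contra hg
    have : g.natDegree ≠ max (f.natDegree - 1) g.natDegree := fun hd => lead g hg (hd ▸ hgN)
    omega
  rw [hg, Polynomial.natDegree_zero] at hf
  exact ⟨by omega, hg⟩

namespace TwistorRing

def u : TwistorRing := Ideal.Quotient.mk _ (X 0)

def v : TwistorRing := Ideal.Quotient.mk _ (X 1)

theorem v_sq : v ^ 2 = -(u ^ 2 + 1) := by
  rw [eq_neg_iff_add_eq_zero, u, v, ← map_pow, ← map_pow, ← map_one (Ideal.Quotient.mk _),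
    ← map_add, ← map_add, Ideal.Quotient.eq_zero_iff_mem]
  exact Ideal.subset_span (by rw [Set.mem_singleton_iff]; ring)

theorem exists_eq_aeval_u_add_aeval_u_mul_v (a : TwistorRing) :
    ∃ f g : Polynomial ℝ, a = Polynomial.aeval u f + Polynomial.aeval u g * v := by
  obtain ⟨p, rfl⟩ := Ideal.Quotient.mk_surjective a
  induction p using MvPolynomial.induction_on with
  | C r => exact ⟨Polynomial.C r, 0, by rw [Polynomial.aeval_C, map_zero, zero_mul, add_zero]; rfl⟩
  | add p q hp hq =>
    obtain ⟨f₁, g₁, h₁⟩ := hp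
    obtain ⟨f₂, g₂, h₂⟩ := hq
    exact ⟨f₁ + f₂, g₁ + g₂, by rw [map_add, h₁, h₂, map_add, map_add]; ring⟩
  | mul_X p i hp =>
    obtain ⟨f, g, h⟩ := hp
    rw [map_mul, h]
    fin_cases i
    · refine ⟨Polynomial.X * f, Polynomial.X * g, ?_⟩
      change _ * u = _
      simp only [map_mul, Polynomial.aeval_X]
      ring
    · refine ⟨-((Polynomial.X ^ 2 + 1) * g), f, ?_⟩
      simp only [map_neg, map_mul, map_add, map_pow, map_one, Polynomial.aeval_X]
      change _ * v = _
      linear_combination Polynomial.aeval u g * v_sq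

end TwistorRing

/-- under the embedding `A = ℝ[u,v]/(u² + v² + 1) → ℂ((t⁻¹))` with
`u ↦ (t − t⁻¹)/2` and `v ↦ (t + t⁻¹)/(2i)`, the preimage of the valuation subring
`ℂ[[t⁻¹]] ⊂ ℂ((t⁻¹))` (the series with no positive powers of `t`) is exactly the
subring `ℝ·1` of constants. -/
theorem stmt7 (φ : TwistorRing →ₐ[ℝ] LaurentSeries ℂ)
    (hu : φ (Ideal.Quotient.mk _ (X 0)) = (tPow 1 - tPow (-1)) / 2)
    (hv : φ (Ideal.Quotient.mk _ (X 1)) =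
      (tPow 1 + tPow (-1)) / (2 * algebraMap ℂ (LaurentSeries ℂ) Complex.I)) :
    ⇑φ ⁻¹' {f : LaurentSeries ℂ | ∀ m : ℤ, m < 0 → f.coeff m = 0} =
      Set.range (algebraMap ℝ TwistorRing) := by
  have hφ (f g : Polynomial ℝ) :
      φ (Polynomial.aeval TwistorRing.u f + Polynomial.aeval TwistorRing.u g * TwistorRing.v) =
      Polynomial.aeval twistorU f + Polynomial.aeval twistorU g * twistorV := by
    rw [map_add, map_mul, ← Polynomial.aeval_algHom_apply, ← Polynomial.aeval_algHom_apply,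
      show φ TwistorRing.u = twistorU from hu, show φ TwistorRing.v = twistorV from hv]
  ext a
  constructor
  · intro ha
    obtain ⟨f, g, rfl⟩ := TwistorRing.exists_eq_aeval_u_add_aeval_u_mul_v a
    rw [Set.mem_preimage, hφ] at ha
    obtain ⟨hf, rfl⟩ := natDegree_eq_zero_and_eq_zero_of_coeff_neg_eq_zero f g ha
    refine ⟨f.coeff 0, ?_⟩
    rw [Polynomial.eq_C_of_natDegree_eq_zero hf]
    simp
  · rintro ⟨r, rfl⟩ m hm
    rw [AlgHom.commutes, algebraMap_real_eq_C, HahnSeries.C_apply, coeff_single_of_ne hm.ne]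

end
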